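/- arXiv:2406.10009 — 4 statements merged into one kernel-verified Lean document; each statement's English description precedes it below -/
import Mathlib

section
/- Let H be a bialgebra over a field k, and let ⇀, ↼ : H⊗H→H be a left and a right action of H on itself making H a left and right H-module coalgebra respectively. Define σ: H⊗H→H⊗H by σ(a⊗b) = (a₁⇀b₁)⊗(a₂↼b₂). Then σ satisfies the four compatibility conditions σ(Id⊗u)=u⊗Id, σ(u⊗Id)=Id⊗u, σ∘m_{23}=m_{12}σ_{23}σ_{12}, σ∘m_{12}=m_{23}σ_{12}σ_{23} if and only if (⇀,↼) satisfies: a⇀1=ε(a)1, 1↼a=ε(a)1, a⇀(bc)=(a₁⇀b₁)((a₂↼b₂)⇀c), and (ab)↼c=(a↼(b₁⇀c₁))(b₂↼c₂) for all a,b,c ∈ H. -/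
/-!
Regard `H ⊗ H` and `(H ⊗ H) ⊗ H` as tensor-product coalgebras. Then `σ = (⇀ ⊗ ↼) ∘ Δ`, and the
module-coalgebra axioms say that `⇀` and `↼` commute with comultiplication. Applying `id ⊗ ε`
(resp. `ε ⊗ id`) to `σ` gives back `⇀` (resp. `↼`), which turns each multiplicativity condition on
`σ` into the corresponding one on `(⇀, ↼)`; the unit conditions correspond through the counit
axiom in the form `(f ⊗ id) (Δ a) = u ⊗ a ↔ f = ε(-) u`.
Conversely, `m₂₃`, `m₁₂`, `↼ ⊗ id` and `(id ⊗ ⇀) ∘ α` commute with comultiplication, so once the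
conditions on `(⇀, ↼)` and the action axioms are substituted, both sides of each multiplicativity
condition on `σ` become one map applied to the twofold comultiplication of `(H ⊗ H) ⊗ H`, bracketed
in the two possible ways, and coassociativity identifies them.
-/

open TensorProduct

noncomputable section

variable (k H : Type*) [Field k] [Ring H] [Bialgebra k H]

/-- Multiplication of `H` as a linear map. -/
def mu : H ⊗[k] H →ₗ[k] H := LinearMap.mul' k H
/-- Comultiplication. -/
def delta : H →ₗ[k] H ⊗[k] H := Coalgebra.comul
/-- Counit. -/
def eps : H →ₗ[k] k := Coalgebra.counit
/-- Flip `a⊗b ↦ b⊗a`. -/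
def tau : H ⊗[k] H →ₗ[k] H ⊗[k] H := (TensorProduct.comm k H H).toLinearMap
/-- Associator. -/
def assocMap : (H ⊗[k] H) ⊗[k] H →ₗ[k] H ⊗[k] (H ⊗[k] H) :=
  (TensorProduct.assoc k H H H).toLinearMap
/-- Inverse associator. -/
def assocInv : H ⊗[k] (H ⊗[k] H) →ₗ[k] (H ⊗[k] H) ⊗[k] H :=
  (TensorProduct.assoc k H H H).symm.toLinearMap
/-- The middle-four interchange `(a⊗b)⊗(c⊗d) ↦ (a⊗c)⊗(b⊗d)`. -/
def ttcMap : (H ⊗[k] H) ⊗[k] (H ⊗[k] H) →ₗ[k] (H ⊗[k] H) ⊗[k] (H ⊗[k] H) :=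
  (TensorProduct.tensorTensorTensorComm k H H H H).toLinearMap
/-- `a⊗b ↦ (a₁⊗b₁)⊗(a₂⊗b₂)` (Sweedler notation). -/
def dd : H ⊗[k] H →ₗ[k] (H ⊗[k] H) ⊗[k] (H ⊗[k] H) :=
  ttcMap k H ∘ₗ map (delta k H) (delta k H)
/-- `a⊗b ↦ ((a₁⊗b₁)⊗(a₂⊗b₂))⊗(a₃⊗b₃)`. -/
def ddd : H ⊗[k] H →ₗ[k] ((H ⊗[k] H) ⊗[k] (H ⊗[k] H)) ⊗[k] (H ⊗[k] H) :=
  map (dd k H) LinearMap.id ∘ₗ dd k H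
/-- `a⊗b ↦ ε(a)ε(b)`. -/
def epseps : H ⊗[k] H →ₗ[k] k := LinearMap.mul' k k ∘ₗ map (eps k H) (eps k H)
/-- `σ(a⊗b) = (a₁⇀b₁)⊗(a₂↼b₂)` attached to a pair of "actions". -/
def sig (l r : H ⊗[k] H →ₗ[k] H) : H ⊗[k] H →ₗ[k] H ⊗[k] H :=
  map l r ∘ₗ dd k H

open LinearMap (id lTensor rTensor)
open Coalgebra (comul counit)

section Coalgebra

variable {R A C D E M N P : Type*} [CommSemiring R] [AddCommMonoid M] [Module R M]
  [AddCommMonoid N] [Module R N] [AddCommMonoid P] [Module R P]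
  [AddCommMonoid A] [Module R A] [Coalgebra R A] [AddCommMonoid C] [Module R C] [Coalgebra R C]
  [AddCommMonoid D] [Module R D] [Coalgebra R D] [AddCommMonoid E] [Module R E] [Coalgebra R E]

theorem Coalgebra.sum_counit_right_smul {c : C} {ι : Type*} (𝓡 : Coalgebra.Repr R c ι) :
    ∑ i ∈ 𝓡.index, counit (R := R) (𝓡.right i) • 𝓡.left i = c := by
  simpa only [map_sum, _root_.TensorProduct.rid_tmul, one_smul] using
    congrArg (_root_.TensorProduct.rid R C) (sum_tmul_counit_eq 𝓡)

theorem rTensor_comul_eq_tmul_iff (f : C →ₗ[R] M) (u : M) :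
    (∀ c, rTensor C f (comul c) = u ⊗ₜ[R] c) ↔ ∀ c, f c = counit (R := R) c • u := by
  constructor
  · intro h c
    have := congrArg ((TensorProduct.rid R M).toLinearMap ∘ₗ lTensor M counit) (h c)
    simpa [← LinearMap.rTensor_comp_lTensor, ← LinearMap.comp_apply (lTensor M counit),
      LinearMap.lTensor_comp_rTensor] using this
  · intro h c
    rw [show f = LinearMap.toSpanSingleton R M u ∘ₗ counit from LinearMap.ext fun c => by simp [h]]
    simp [LinearMap.rTensor_comp]

theorem lTensor_comul_eq_tmul_iff (f : C →ₗ[R] M) (u : M) :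
    (∀ c, lTensor C f (comul c) = c ⊗ₜ[R] u) ↔ ∀ c, f c = counit (R := R) c • u := by
  constructor
  · intro h c
    have := congrArg ((TensorProduct.lid R M).toLinearMap ∘ₗ rTensor M counit) (h c)
    simpa [← LinearMap.lTensor_comp_rTensor, ← LinearMap.comp_apply (rTensor M counit),
      LinearMap.rTensor_comp_lTensor] using this
  · intro h c
    rw [show f = LinearMap.toSpanSingleton R M u ∘ₗ counit from LinearMap.ext fun c => by simp [h]]
    simp [LinearMap.lTensor_comp]

theorem map_map_comp_rTensor_comul_comp_comul (f : C →ₗ[R] M) (g : C →ₗ[R] N) (h : C →ₗ[R] P) :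
    map (map f g) h ∘ₗ rTensor C comul ∘ₗ comul =
      (TensorProduct.assoc R M N P).symm.toLinearMap ∘ₗ map f (map g h) ∘ₗ
        lTensor C comul ∘ₗ comul := by
  simp [coassoc_simps]

theorem assoc_comp_rTensor_comul :
    (TensorProduct.assoc R C C D).toLinearMap ∘ₗ rTensor D comul =
      rTensor (C ⊗[R] D) ((TensorProduct.rid R C).toLinearMap ∘ₗ lTensor C counit) ∘ₗ comul := by
  ext x d
  simp only [AlgebraTensorModule.curry_apply, curry_apply, LinearMap.coe_restrictScalars,
    LinearMap.comp_apply, LinearMap.rTensor_tmul, TensorProduct.comul_tmul, LinearEquiv.coe_coe]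
  induction comul (R := R) x using TensorProduct.induction_on with
  | zero => simp
  | add s t hs ht => simp [add_tmul, hs, ht]
  | tmul u v =>
    rw [← (Coalgebra.Repr.arbitrary R d).eq]
    simp [tmul_sum, smul_tmul', ← Coalgebra.sum_counit_smul (Coalgebra.Repr.arbitrary R d)]

theorem assoc_symm_comp_lTensor_comul :
    (TensorProduct.assoc R D C C).symm.toLinearMap ∘ₗ lTensor D comul =
      lTensor (D ⊗[R] C) ((TensorProduct.lid R C).toLinearMap ∘ₗ rTensor C counit) ∘ₗ comul := by
  ext d x
  simp only [AlgebraTensorModule.curry_apply, curry_apply, LinearMap.coe_restrictScalars,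
    LinearMap.comp_apply, LinearMap.lTensor_tmul, TensorProduct.comul_tmul, LinearEquiv.coe_coe]
  induction comul (R := R) x using TensorProduct.induction_on with
  | zero => simp
  | add s t hs ht => simp [tmul_add, hs, ht]
  | tmul u v =>
    rw [← (Coalgebra.Repr.arbitrary R d).eq]
    simp [sum_tmul, smul_tmul', ← Coalgebra.sum_counit_right_smul (Coalgebra.Repr.arbitrary R d)]

theorem comul_comp_map {f : C →ₗ[R] A} {g : D →ₗ[R] E} (hf : comul ∘ₗ f = map f f ∘ₗ comul)
    (hg : comul ∘ₗ g = map g g ∘ₗ comul) :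
    comul ∘ₗ map f g = map (map f g) (map f g) ∘ₗ comul := by
  simp only [TensorProduct.comul_def, coassoc_simps, hf, hg]

end Coalgebra

section Matched

def idTensorEps : H ⊗[k] H →ₗ[k] H := (TensorProduct.rid k H).toLinearMap ∘ₗ lTensor H (eps k H)

def epsTensorId : H ⊗[k] H →ₗ[k] H := (TensorProduct.lid k H).toLinearMap ∘ₗ rTensor H (eps k H)

variable {k H}

theorem dd_eq_comul : dd k H = comul := rfl

theorem epseps_eq_counit : epseps k H = counit := by
  ext a b
  simp [epseps, eps, mul_comm]

theorem comul_comp_mu : comul ∘ₗ mu k H = map (mu k H) (mu k H) ∘ₗ comul :=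
  (Bialgebra.mulCoalgHom k H).map_comp_comul.symm

theorem comul_comp_assocMap :
    comul ∘ₗ assocMap k H = map (assocMap k H) (assocMap k H) ∘ₗ comul :=
  (Coalgebra.TensorProduct.assoc k k H H H).toCoalgHom.map_comp_comul.symm

theorem comul_comp_map_comp_assocMap {f : H →ₗ[k] H} {h : H ⊗[k] H →ₗ[k] H}
    (hf : comul ∘ₗ f = map f f ∘ₗ comul) (hh : comul ∘ₗ h = map h h ∘ₗ comul) :
    comul ∘ₗ map f h ∘ₗ assocMap k H =
      map (map f h ∘ₗ assocMap k H) (map f h ∘ₗ assocMap k H) ∘ₗ comul := by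
  rw [← LinearMap.comp_assoc, comul_comp_map hf hh, LinearMap.comp_assoc, comul_comp_assocMap,
    ← LinearMap.comp_assoc, ← map_comp]

theorem sig_comp {E : Type*} [AddCommMonoid E] [Module k E] [Coalgebra k E]
    (l r : H ⊗[k] H →ₗ[k] H) {f : E →ₗ[k] H ⊗[k] H} (hf : comul ∘ₗ f = map f f ∘ₗ comul) :
    sig k H l r ∘ₗ f = map (l ∘ₗ f) (r ∘ₗ f) ∘ₗ comul := by
  rw [sig, dd_eq_comul, LinearMap.comp_assoc, hf, ← LinearMap.comp_assoc, map_comp]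

theorem idTensorEps_comp_sig (l r : H ⊗[k] H →ₗ[k] H) (hr : eps k H ∘ₗ r = epseps k H) :
    idTensorEps k H ∘ₗ sig k H l r = l := by
  rw [idTensorEps, sig, dd_eq_comul, LinearMap.comp_assoc, ← LinearMap.comp_assoc _ (map l r),
    LinearMap.lTensor_comp_map, hr, epseps_eq_counit, CoassocSimps.map_counit_comp_comul_right]
  ext x
  simp

theorem epsTensorId_comp_sig (l r : H ⊗[k] H →ₗ[k] H) (hl : eps k H ∘ₗ l = epseps k H) :
    epsTensorId k H ∘ₗ sig k H l r = r := by
  rw [epsTensorId, sig, dd_eq_comul, LinearMap.comp_assoc, ← LinearMap.comp_assoc _ (map l r),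
    LinearMap.rTensor_comp_map, hl, epseps_eq_counit, CoassocSimps.map_counit_comp_comul_left]
  ext x
  simp

theorem idTensorEps_comp_rTensor_mu :
    idTensorEps k H ∘ₗ map (mu k H) id ∘ₗ assocInv k H = mu k H ∘ₗ map id (idTensorEps k H) := by
  ext a b c
  simp [idTensorEps, mu, assocInv]

theorem epsTensorId_comp_lTensor_mu :
    epsTensorId k H ∘ₗ map id (mu k H) ∘ₗ assocMap k H = mu k H ∘ₗ map (epsTensorId k H) id := by
  ext a b c
  simp [epsTensorId, mu, assocMap]

theorem l_comp_lTensor_mu_of_sig_comp (l r : H ⊗[k] H →ₗ[k] H) (hr : eps k H ∘ₗ r = epseps k H)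
    (h : sig k H l r ∘ₗ map id (mu k H) ∘ₗ assocMap k H
        = map (mu k H) id ∘ₗ assocInv k H ∘ₗ map id (sig k H l r) ∘ₗ
            assocMap k H ∘ₗ map (sig k H l r) id) :
    l ∘ₗ map id (mu k H) ∘ₗ assocMap k H
        = mu k H ∘ₗ map id l ∘ₗ assocMap k H ∘ₗ map (sig k H l r) id := by
  calc l ∘ₗ map id (mu k H) ∘ₗ assocMap k H
      = idTensorEps k H ∘ₗ sig k H l r ∘ₗ map id (mu k H) ∘ₗ assocMap k H := by
        rw [← LinearMap.comp_assoc _ (sig k H l r), idTensorEps_comp_sig l r hr]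
    _ = (idTensorEps k H ∘ₗ map (mu k H) id ∘ₗ assocInv k H) ∘ₗ map id (sig k H l r) ∘ₗ
            assocMap k H ∘ₗ map (sig k H l r) id := by
        rw [h]; simp only [LinearMap.comp_assoc]
    _ = _ := by
        rw [idTensorEps_comp_rTensor_mu, LinearMap.comp_assoc,
          CoassocSimps.TensorProduct.map_comp_assoc, LinearMap.id_comp, idTensorEps_comp_sig l r hr]

theorem r_comp_rTensor_mu_of_sig_comp (l r : H ⊗[k] H →ₗ[k] H) (hl : eps k H ∘ₗ l = epseps k H)
    (h : sig k H l r ∘ₗ map (mu k H) id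
        = map id (mu k H) ∘ₗ assocMap k H ∘ₗ map (sig k H l r) id ∘ₗ
            assocInv k H ∘ₗ map id (sig k H l r) ∘ₗ assocMap k H) :
    r ∘ₗ map (mu k H) id
        = mu k H ∘ₗ map r id ∘ₗ assocInv k H ∘ₗ map id (sig k H l r) ∘ₗ assocMap k H := by
  calc r ∘ₗ map (mu k H) id
      = epsTensorId k H ∘ₗ sig k H l r ∘ₗ map (mu k H) id := by
        rw [← LinearMap.comp_assoc _ (sig k H l r), epsTensorId_comp_sig l r hl]
    _ = (epsTensorId k H ∘ₗ map id (mu k H) ∘ₗ assocMap k H) ∘ₗ map (sig k H l r) id ∘ₗ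
            assocInv k H ∘ₗ map id (sig k H l r) ∘ₗ assocMap k H := by
        rw [h]; simp only [LinearMap.comp_assoc]
    _ = _ := by
        rw [epsTensorId_comp_lTensor_mu, LinearMap.comp_assoc,
          CoassocSimps.TensorProduct.map_comp_assoc, LinearMap.id_comp, epsTensorId_comp_sig l r hl]

theorem sig_tmul_one (l r : H ⊗[k] H →ₗ[k] H) (hr1 : ∀ a : H, r (a ⊗ₜ[k] (1 : H)) = a) (a : H) :
    sig k H l r (a ⊗ₜ[k] 1) = rTensor H (l ∘ₗ (TensorProduct.mk k H H).flip 1) (comul a) := by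
  simp only [sig, dd, ttcMap, LinearMap.comp_apply, map_tmul, delta, Bialgebra.comul_one,
    Algebra.TensorProduct.one_def]
  induction comul (R := k) a using TensorProduct.induction_on with
  | zero => simp
  | add s t hs ht => simp_all [add_tmul]
  | tmul u v => simp [hr1]

theorem sig_one_tmul (l r : H ⊗[k] H →ₗ[k] H) (hl1 : ∀ b : H, l ((1 : H) ⊗ₜ[k] b) = b) (b : H) :
    sig k H l r (1 ⊗ₜ[k] b) = lTensor H (r ∘ₗ TensorProduct.mk k H H 1) (comul b) := by
  simp only [sig, dd, ttcMap, LinearMap.comp_apply, map_tmul, delta, Bialgebra.comul_one,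
    Algebra.TensorProduct.one_def]
  induction comul (R := k) b using TensorProduct.induction_on with
  | zero => simp
  | add s t hs ht => simp_all [tmul_add]
  | tmul u v => simp [hl1]

theorem sig_tmul_one_eq_iff (l r : H ⊗[k] H →ₗ[k] H) (hr1 : ∀ a : H, r (a ⊗ₜ[k] (1 : H)) = a) :
    (∀ a : H, sig k H l r (a ⊗ₜ[k] (1 : H)) = (1 : H) ⊗ₜ[k] a) ↔
      ∀ a : H, l (a ⊗ₜ[k] (1 : H)) = eps k H a • (1 : H) := by
  simp only [sig_tmul_one l r hr1]
  exact rTensor_comul_eq_tmul_iff _ 1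

theorem sig_one_tmul_eq_iff (l r : H ⊗[k] H →ₗ[k] H) (hl1 : ∀ b : H, l ((1 : H) ⊗ₜ[k] b) = b) :
    (∀ b : H, sig k H l r ((1 : H) ⊗ₜ[k] b) = b ⊗ₜ[k] (1 : H)) ↔
      ∀ b : H, r ((1 : H) ⊗ₜ[k] b) = eps k H b • (1 : H) := by
  simp only [sig_one_tmul l r hl1]
  exact lTensor_comul_eq_tmul_iff _ 1

theorem assocMap_comp_rTensor_sig (l r : H ⊗[k] H →ₗ[k] H) :
    assocMap k H ∘ₗ map (sig k H l r) id =
      map (l ∘ₗ (TensorProduct.rid k (H ⊗[k] H)).toLinearMap ∘ₗ lTensor (H ⊗[k] H) counit)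
        (map r id) ∘ₗ comul := by
  have K := assoc_comp_rTensor_comul (R := k) (C := H ⊗[k] H) (D := H)
  rw [LinearMap.rTensor_def, LinearMap.rTensor_def] at K
  calc assocMap k H ∘ₗ map (map l r ∘ₗ comul) id
      = (assocMap k H ∘ₗ map (map l r) id) ∘ₗ map comul id := by
        rw [LinearMap.comp_assoc, ← TensorProduct.map_comp, LinearMap.id_comp]
    _ = map l (map r id) ∘ₗ
          ((TensorProduct.assoc k (H ⊗[k] H) (H ⊗[k] H) H).toLinearMap ∘ₗ map comul id) := by
        rw [assocMap, ← TensorProduct.map_map_comp_assoc_eq, LinearMap.comp_assoc]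
    _ = _ := by
        rw [K, ← LinearMap.comp_assoc, ← TensorProduct.map_comp, LinearMap.comp_id]

theorem sig_comp_lTensor_mu_of_l_comp (l r : H ⊗[k] H →ₗ[k] H)
    (hr2 : ∀ a b c : H, r (a ⊗ₜ[k] (b * c)) = r (r (a ⊗ₜ[k] b) ⊗ₜ[k] c))
    (hcomul_r : delta k H ∘ₗ r = map r r ∘ₗ dd k H)
    (h3 : l ∘ₗ map id (mu k H) ∘ₗ assocMap k H
        = mu k H ∘ₗ map id l ∘ₗ assocMap k H ∘ₗ map (sig k H l r) id) :
    sig k H l r ∘ₗ map id (mu k H) ∘ₗ assocMap k H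
        = map (mu k H) id ∘ₗ assocInv k H ∘ₗ map id (sig k H l r) ∘ₗ
            assocMap k H ∘ₗ map (sig k H l r) id := by
  set P := l ∘ₗ (TensorProduct.rid k (H ⊗[k] H)).toLinearMap ∘ₗ
    lTensor (H ⊗[k] H) (counit (R := k) (A := H)) with hP
  have hm : comul ∘ₗ map id (mu k H) ∘ₗ assocMap k H =
      map (map id (mu k H) ∘ₗ assocMap k H) (map id (mu k H) ∘ₗ assocMap k H) ∘ₗ comul :=
    comul_comp_map_comp_assocMap (by simp) comul_comp_mu
  have hr : comul ∘ₗ map r id = map (map r id) (map r id) ∘ₗ comul :=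
    comul_comp_map (g := (id : H →ₗ[k] H)) hcomul_r (by simp)
  have hr2' : r ∘ₗ map id (mu k H) ∘ₗ assocMap k H = r ∘ₗ map r id :=
    TensorProduct.ext_threefold fun a b c => hr2 a b c
  have hl3 : l ∘ₗ map id (mu k H) ∘ₗ assocMap k H = mu k H ∘ₗ map P (l ∘ₗ map r id) ∘ₗ comul := by
    rw [h3, assocMap_comp_rTensor_sig, CoassocSimps.TensorProduct.map_comp_assoc,
      LinearMap.id_comp]
  calc sig k H l r ∘ₗ map id (mu k H) ∘ₗ assocMap k H
      = map (mu k H ∘ₗ map P (l ∘ₗ map r id) ∘ₗ comul) (r ∘ₗ map r id) ∘ₗ comul := by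
        rw [sig_comp l r hm, hl3, hr2']
    _ = map (mu k H) id ∘ₗ map (map P (l ∘ₗ map r id)) (r ∘ₗ map r id) ∘ₗ
          rTensor _ comul ∘ₗ comul := by
        simp only [coassoc_simps]
    _ = map (mu k H) id ∘ₗ assocInv k H ∘ₗ map P (map (l ∘ₗ map r id) (r ∘ₗ map r id)) ∘ₗ
          lTensor _ comul ∘ₗ comul := by
        rw [map_map_comp_rTensor_comul_comp_comul]; rfl
    _ = _ := by
        rw [assocMap_comp_rTensor_sig, CoassocSimps.TensorProduct.map_comp_assoc,
          LinearMap.id_comp, sig_comp l r hr]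
        simp only [hP, coassoc_simps]

theorem assocInv_comp_lTensor_sig_comp_assocMap (l r : H ⊗[k] H →ₗ[k] H) :
    assocInv k H ∘ₗ map id (sig k H l r) ∘ₗ assocMap k H =
      map (map id l ∘ₗ assocMap k H)
        (r ∘ₗ (TensorProduct.lid k (H ⊗[k] H)).toLinearMap ∘ₗ rTensor (H ⊗[k] H) counit ∘ₗ
          assocMap k H) ∘ₗ comul := by
  have K := assoc_symm_comp_lTensor_comul (R := k) (C := H ⊗[k] H) (D := H)
  rw [LinearMap.lTensor_def, LinearMap.lTensor_def] at K
  calc assocInv k H ∘ₗ map id (map l r ∘ₗ comul) ∘ₗ assocMap k H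
      = (assocInv k H ∘ₗ map id (map l r)) ∘ₗ map id comul ∘ₗ assocMap k H := by
        simp only [coassoc_simps]
    _ = map (map id l) r ∘ₗ
          ((TensorProduct.assoc k H (H ⊗[k] H) (H ⊗[k] H)).symm.toLinearMap ∘ₗ map id comul) ∘ₗ
            assocMap k H := by
        rw [assocInv, ← TensorProduct.map_map_comp_assoc_symm_eq]
        simp only [LinearMap.comp_assoc]
    _ = _ := by
        rw [K, LinearMap.comp_assoc, comul_comp_assocMap]
        simp only [coassoc_simps]

theorem sig_comp_rTensor_mu_of_r_comp (l r : H ⊗[k] H →ₗ[k] H)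
    (hl2 : ∀ a b c : H, l ((a * b) ⊗ₜ[k] c) = l (a ⊗ₜ[k] l (b ⊗ₜ[k] c)))
    (hcomul_l : delta k H ∘ₗ l = map l l ∘ₗ dd k H)
    (h4 : r ∘ₗ map (mu k H) id
        = mu k H ∘ₗ map r id ∘ₗ assocInv k H ∘ₗ map id (sig k H l r) ∘ₗ assocMap k H) :
    sig k H l r ∘ₗ map (mu k H) id
        = map id (mu k H) ∘ₗ assocMap k H ∘ₗ map (sig k H l r) id ∘ₗ
            assocInv k H ∘ₗ map id (sig k H l r) ∘ₗ assocMap k H := by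
  set Q := r ∘ₗ (TensorProduct.lid k (H ⊗[k] H)).toLinearMap ∘ₗ
    rTensor (H ⊗[k] H) (counit (R := k) (A := H)) ∘ₗ assocMap k H with hQ
  set L := map id l ∘ₗ assocMap k H
  have hm : comul ∘ₗ map (mu k H) id = map (map (mu k H) id) (map (mu k H) id) ∘ₗ comul :=
    comul_comp_map (g := (id : H →ₗ[k] H)) comul_comp_mu (by simp)
  have hL : comul ∘ₗ L = map L L ∘ₗ comul := comul_comp_map_comp_assocMap (by simp) hcomul_l
  have hl2' : l ∘ₗ map (mu k H) id = l ∘ₗ L :=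
    TensorProduct.ext_threefold fun a b c => hl2 a b c
  have hr4 : r ∘ₗ map (mu k H) id = mu k H ∘ₗ map (r ∘ₗ L) Q ∘ₗ comul := by
    rw [h4, assocInv_comp_lTensor_sig_comp_assocMap, CoassocSimps.TensorProduct.map_comp_assoc,
      LinearMap.id_comp]
  calc sig k H l r ∘ₗ map (mu k H) id
      = map (l ∘ₗ L) (mu k H ∘ₗ map (r ∘ₗ L) Q ∘ₗ comul) ∘ₗ comul := by
        rw [sig_comp l r hm, hl2', hr4]
    _ = map id (mu k H) ∘ₗ map (l ∘ₗ L) (map (r ∘ₗ L) Q) ∘ₗ lTensor _ comul ∘ₗ comul := by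
        simp only [coassoc_simps]
    _ = map id (mu k H) ∘ₗ assocMap k H ∘ₗ map (map (l ∘ₗ L) (r ∘ₗ L)) Q ∘ₗ
          rTensor _ comul ∘ₗ comul := by
        rw [map_map_comp_rTensor_comul_comp_comul, assocMap, LinearEquiv.comp_symm_assoc]
    _ = _ := by
        rw [assocInv_comp_lTensor_sig_comp_assocMap, CoassocSimps.TensorProduct.map_comp_assoc,
          LinearMap.id_comp, sig_comp l r hL]
        simp only [hQ, coassoc_simps]

end Matched

/-- Lemma 2.4 / Tambara: for a bialgebra `H` with a left action `⇀ = l` and a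
right action `↼ = r` of `H` on itself making `H` a left resp. right `H`-module coalgebra,
the map `σ(a⊗b) = (a₁⇀b₁)⊗(a₂↼b₂)` satisfies (br.1)–(br.4) iff `(l,r)` satisfies
(mp.1)–(mp.4). -/
theorem braided_conditions_iff_matched_pair_conditions
    (l r : H ⊗[k] H →ₗ[k] H)
    (hl1 : ∀ b : H, l ((1 : H) ⊗ₜ[k] b) = b)
    (hl2 : ∀ a b c : H, l ((a * b) ⊗ₜ[k] c) = l (a ⊗ₜ[k] l (b ⊗ₜ[k] c)))
    (hr1 : ∀ a : H, r (a ⊗ₜ[k] (1 : H)) = a)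
    (hr2 : ∀ a b c : H, r (a ⊗ₜ[k] (b * c)) = r (r (a ⊗ₜ[k] b) ⊗ₜ[k] c))
    (hcomul_l : delta k H ∘ₗ l = map l l ∘ₗ dd k H)
    (hcounit_l : eps k H ∘ₗ l = epseps k H)
    (hcomul_r : delta k H ∘ₗ r = map r r ∘ₗ dd k H)
    (hcounit_r : eps k H ∘ₗ r = epseps k H) :
    ((∀ a : H, sig k H l r (a ⊗ₜ[k] (1 : H)) = (1 : H) ⊗ₜ[k] a) ∧
     (∀ b : H, sig k H l r ((1 : H) ⊗ₜ[k] b) = b ⊗ₜ[k] (1 : H)) ∧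
     (sig k H l r ∘ₗ map LinearMap.id (mu k H) ∘ₗ assocMap k H
        = map (mu k H) LinearMap.id ∘ₗ assocInv k H ∘ₗ map LinearMap.id (sig k H l r) ∘ₗ
            assocMap k H ∘ₗ map (sig k H l r) LinearMap.id) ∧
     (sig k H l r ∘ₗ map (mu k H) LinearMap.id
        = map LinearMap.id (mu k H) ∘ₗ assocMap k H ∘ₗ map (sig k H l r) LinearMap.id ∘ₗ
            assocInv k H ∘ₗ map LinearMap.id (sig k H l r) ∘ₗ assocMap k H))
    ↔
    ((∀ a : H, l (a ⊗ₜ[k] (1 : H)) = eps k H a • (1 : H)) ∧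
     (∀ b : H, r ((1 : H) ⊗ₜ[k] b) = eps k H b • (1 : H)) ∧
     (l ∘ₗ map LinearMap.id (mu k H) ∘ₗ assocMap k H
        = mu k H ∘ₗ map LinearMap.id l ∘ₗ assocMap k H ∘ₗ map (sig k H l r) LinearMap.id) ∧
     (r ∘ₗ map (mu k H) LinearMap.id
        = mu k H ∘ₗ map r LinearMap.id ∘ₗ assocInv k H ∘ₗ map LinearMap.id (sig k H l r) ∘ₗ
            assocMap k H)) := by
  refine and_congr (sig_tmul_one_eq_iff l r hr1) (and_congr (sig_one_tmul_eq_iff l r hl1)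
    (and_congr ?_ ?_))
  · exact ⟨l_comp_lTensor_mu_of_sig_comp l r hcounit_r,
      sig_comp_lTensor_mu_of_l_comp l r hr2 hcomul_r⟩
  · exact ⟨r_comp_rTensor_mu_of_sig_comp l r hcounit_l,
      sig_comp_rTensor_mu_of_r_comp l r hl2 hcomul_l⟩

end
end

section
/- Let H be a bialgebra and σ: H⊗H→H⊗H a linear map satisfying σ(Id⊗u)=u⊗Id, σ(u⊗Id)=Id⊗u, σ∘m_{23}=m_{12}σ_{23}σ_{12}, and σ∘m_{12}=m_{23}σ_{12}σ_{23}. Then ⇀ := (Id⊗ε)∘σ is a left H-action on H and ↼ := (ε⊗Id)∘σ is a right H-action on H. -/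
open TensorProduct

noncomputable section

variable (k H : Type*) [Field k] [Ring H] [Bialgebra k H]

lemma key1 (y : H) (s : H ⊗[k] H) :
    (TensorProduct.rid k H) (map LinearMap.id (eps k H)
      ((map LinearMap.id (mu k H)) ((assocMap k H) (s ⊗ₜ[k] y))))
    = eps k H y • (TensorProduct.rid k H) (map LinearMap.id (eps k H) s) := by
  induction s using TensorProduct.induction_on with
  | zero => simp
  | tmul u v =>
      simp [assocMap, mu, eps, smul_smul, mul_comm]
  | add s t hs ht => simp [add_tmul, hs, ht]

lemma key2 (σ : H ⊗[k] H →ₗ[k] H ⊗[k] H) (a : H) (t : H ⊗[k] H) :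
    (TensorProduct.rid k H) (map LinearMap.id (eps k H)
      ((map LinearMap.id (mu k H)) ((assocMap k H)
        ((map σ LinearMap.id) ((assocInv k H) (a ⊗ₜ[k] t))))))
    = (TensorProduct.rid k H) (map LinearMap.id (eps k H)
        (σ (a ⊗ₜ[k] (TensorProduct.rid k H) (map LinearMap.id (eps k H) t)))) := by
  induction t using TensorProduct.induction_on with
  | zero => simp
  | tmul x y =>
      have h := key1 k H y (σ (a ⊗ₜ[k] x))
      simp only [assocInv, LinearEquiv.coe_coe, TensorProduct.assoc_symm_tmul,
        map_tmul, LinearMap.id_apply] at h ⊢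
      rw [h]
      simp [eps, TensorProduct.tmul_smul]
  | add s t hs ht =>
      simp only [tmul_add, map_add, hs, ht, smul_add]

lemma key1' (u : H) (t : H ⊗[k] H) :
    (TensorProduct.lid k H) (map (eps k H) LinearMap.id
      ((map (mu k H) LinearMap.id) ((assocInv k H) (u ⊗ₜ[k] t))))
    = eps k H u • (TensorProduct.lid k H) (map (eps k H) LinearMap.id t) := by
  induction t using TensorProduct.induction_on with
  | zero => simp
  | tmul x y =>
      simp [assocInv, mu, eps, smul_smul, mul_comm]
  | add s t hs ht => simp [tmul_add, hs, ht]

lemma key2' (σ : H ⊗[k] H →ₗ[k] H ⊗[k] H) (c : H) (s : H ⊗[k] H) :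
    (TensorProduct.lid k H) (map (eps k H) LinearMap.id
      ((map (mu k H) LinearMap.id) ((assocInv k H)
        ((map LinearMap.id σ) ((assocMap k H) (s ⊗ₜ[k] c))))))
    = (TensorProduct.lid k H) (map (eps k H) LinearMap.id
        (σ ((TensorProduct.lid k H) (map (eps k H) LinearMap.id s) ⊗ₜ[k] c))) := by
  induction s using TensorProduct.induction_on with
  | zero => simp
  | tmul u v =>
      have h := key1' k H u (σ (v ⊗ₜ[k] c))
      simp only [assocMap, LinearEquiv.coe_coe, TensorProduct.assoc_tmul,
        map_tmul, LinearMap.id_apply] at h ⊢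
      rw [h, TensorProduct.lid_tmul, ← TensorProduct.smul_tmul', map_smul]
      simp
  | add s t hs ht =>
      simp only [add_tmul, map_add, hs, ht, smul_add]

/-- Lemma 2.7: if `σ : H⊗H → H⊗H` satisfies (br.1)–(br.4), then
`⇀ := (Id⊗ε)∘σ` is a left `H`-action and `↼ := (ε⊗Id)∘σ` is a right `H`-action. -/
theorem actions_from_braiding
    (σ : H ⊗[k] H →ₗ[k] H ⊗[k] H)
    (br1 : ∀ a : H, σ (a ⊗ₜ[k] (1 : H)) = (1 : H) ⊗ₜ[k] a)
    (br2 : ∀ b : H, σ ((1 : H) ⊗ₜ[k] b) = b ⊗ₜ[k] (1 : H))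
    (br3 : σ ∘ₗ map LinearMap.id (mu k H) ∘ₗ assocMap k H
        = map (mu k H) LinearMap.id ∘ₗ assocInv k H ∘ₗ map LinearMap.id σ ∘ₗ
            assocMap k H ∘ₗ map σ LinearMap.id)
    (br4 : σ ∘ₗ map (mu k H) LinearMap.id
        = map LinearMap.id (mu k H) ∘ₗ assocMap k H ∘ₗ map σ LinearMap.id ∘ₗ
            assocInv k H ∘ₗ map LinearMap.id σ ∘ₗ assocMap k H) :
    (∀ c : H, ((TensorProduct.rid k H).toLinearMap ∘ₗ map LinearMap.id (eps k H) ∘ₗ σ)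
        ((1 : H) ⊗ₜ[k] c) = c) ∧
    (∀ a b c : H, ((TensorProduct.rid k H).toLinearMap ∘ₗ map LinearMap.id (eps k H) ∘ₗ σ)
        ((a * b) ⊗ₜ[k] c)
      = ((TensorProduct.rid k H).toLinearMap ∘ₗ map LinearMap.id (eps k H) ∘ₗ σ)
          (a ⊗ₜ[k] ((TensorProduct.rid k H).toLinearMap ∘ₗ map LinearMap.id (eps k H) ∘ₗ σ)
            (b ⊗ₜ[k] c))) ∧
    (∀ c : H, ((TensorProduct.lid k H).toLinearMap ∘ₗ map (eps k H) LinearMap.id ∘ₗ σ)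
        (c ⊗ₜ[k] (1 : H)) = c) ∧
    (∀ a b c : H, ((TensorProduct.lid k H).toLinearMap ∘ₗ map (eps k H) LinearMap.id ∘ₗ σ)
        (a ⊗ₜ[k] (b * c))
      = ((TensorProduct.lid k H).toLinearMap ∘ₗ map (eps k H) LinearMap.id ∘ₗ σ)
          (((TensorProduct.lid k H).toLinearMap ∘ₗ map (eps k H) LinearMap.id ∘ₗ σ)
            (a ⊗ₜ[k] b) ⊗ₜ[k] c)) := by
  refine ⟨?_, ?_, ?_, ?_⟩
  · intro c
    simp [br2 c, eps]
  · intro a b c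
    have h4 := LinearMap.congr_fun br4 ((a ⊗ₜ[k] b) ⊗ₜ[k] c)
    simp only [LinearMap.comp_apply, map_tmul, LinearMap.id_apply, mu,
      LinearMap.mul'_apply, assocMap, LinearEquiv.coe_coe,
      TensorProduct.assoc_tmul] at h4
    simp only [LinearMap.comp_apply, LinearEquiv.coe_coe]
    rw [h4]
    have := key2 k H σ a (σ (b ⊗ₜ[k] c))
    simp only [assocMap, LinearEquiv.coe_coe] at this
    exact this
  · intro c
    simp [br1 c, eps]
  · intro a b c
    have h3 := LinearMap.congr_fun br3 ((a ⊗ₜ[k] b) ⊗ₜ[k] c)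
    simp only [LinearMap.comp_apply, map_tmul, LinearMap.id_apply, mu,
      LinearMap.mul'_apply, assocMap, LinearEquiv.coe_coe,
      TensorProduct.assoc_tmul] at h3
    simp only [LinearMap.comp_apply, LinearEquiv.coe_coe]
    rw [h3]
    have := key2' k H σ c (σ (a ⊗ₜ[k] b))
    simp only [assocInv, LinearEquiv.coe_coe] at this
    exact this


end
end

section
/- Let H^• = (H,•,1,Δ,ε) be a bialgebra, and suppose H carries a second associative unital product · with the same unit 1, such that there is a linear map S: H→H with S(a₁)·a₂ = ε(a)1 = a₁·S(a₂), and the Hopf brace compatibility a•(b·c) = (a₁•b)·S(a₂)·(a₃•c) holds. Then a⇀b := S(a₁)·(a₂•b) defines a left action of the monoid (H,•) on H, and (H,·,1) is a left H^•-module algebra for this action: a⇀(b·c) = (a₁⇀b)·(a₂⇀c) and a⇀1 = ε(a)1. -/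
open TensorProduct

noncomputable section

variable (k H : Type*) [Field k] [Ring H] [Bialgebra k H]

/-- `a ↦ (a₁⊗a₂)⊗a₃`. -/
def delta3 : H →ₗ[k] (H ⊗[k] H) ⊗[k] H :=
  map (delta k H) LinearMap.id ∘ₗ delta k H

/-!
With `R_b x = x • b` and the convolution `f ⋆ g = cd ∘ (f ⊗ g) ∘ Δ`, the action is
`(· ⇀ b) = S ⋆ R_b`, and the brace compatibility reads `R_{b·c} = (R_b ⋆ S) ⋆ R_c`.
Associativity of `⋆` then gives `a ⇀ (b·c) = (a₁ ⇀ b)·(a₂ ⇀ c)` at once. For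
`(a•b) ⇀ c = a ⇀ (b ⇀ c)`, regard both sides as maps on the coalgebra `H ⊗ H`: convolving
either on the left with the multiplication `μ` gives `R_c ∘ μ`, and `μ` has the left
convolution inverse `S ∘ μ` because it is a coalgebra map, so the two maps agree.
-/

open Coalgebra

lemma Algebra.linearMap_comp_eq_smulRight {R A M : Type*} [CommSemiring R] [Semiring A]
    [Algebra R A] [AddCommMonoid M] [Module R M] (f : M →ₗ[R] R) :
    Algebra.linearMap R A ∘ₗ f = f.smulRight 1 := by
  ext x
  simp [Algebra.algebraMap_eq_smul_one]

lemma exists_fin_sum_tmul_tmul {R M N P : Type*} [CommSemiring R] [AddCommMonoid M] [Module R M]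
    [AddCommMonoid N] [Module R N] [AddCommMonoid P] [Module R P] (t : (M ⊗[R] N) ⊗[R] P) :
    ∃ (n : ℕ) (x : Fin n → M) (y : Fin n → N) (z : Fin n → P),
      t = ∑ i, (x i ⊗ₜ y i) ⊗ₜ z i := by
  let IsFinSum : (M ⊗[R] N) ⊗[R] P → Prop := fun t =>
    ∃ (n : ℕ) (x : Fin n → M) (y : Fin n → N) (z : Fin n → P), t = ∑ i, (x i ⊗ₜ y i) ⊗ₜ z i
  have zero : IsFinSum 0 := ⟨0, Fin.elim0, Fin.elim0, Fin.elim0, by simp⟩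
  have add : ∀ s t, IsFinSum s → IsFinSum t → IsFinSum (s + t) := by
    rintro s t ⟨n₁, x₁, y₁, z₁, rfl⟩ ⟨n₂, x₂, y₂, z₂, rfl⟩
    exact ⟨n₁ + n₂, Fin.append x₁ x₂, Fin.append y₁ y₂, Fin.append z₁ z₂,
      by simp [Fin.sum_univ_add]⟩
  induction t using TensorProduct.induction_on with
  | zero => exact zero
  | tmul p z =>
    induction p using TensorProduct.induction_on with
    | zero => simpa using zero
    | tmul x y => exact ⟨1, fun _ => x, fun _ => y, fun _ => z, by simp⟩
    | add p q hp hq => simpa [add_tmul] using add _ _ hp hq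
  | add s t hs ht => exact add s t hs ht

section Convolution

variable {R C D A : Type*} [CommSemiring R] [AddCommMonoid C] [Module R C] [Coalgebra R C]
  [AddCommMonoid D] [Module R D] [Coalgebra R D] [AddCommMonoid A] [Module R A]
  (m : A ⊗[R] A →ₗ[R] A)

/-- Convolution with respect to an arbitrary product `m` on `A`; Mathlib's `WithConv` only
covers the multiplication of an algebra, whereas here `A = H` carries a second product. -/
def convBy (f g : C →ₗ[R] A) : C →ₗ[R] A := m ∘ₗ map f g ∘ₗ comul

lemma convBy_apply_repr {ι : Type*} {c : C} (𝓡 : Repr R c ι) (f g : C →ₗ[R] A) :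
    convBy m f g c = ∑ i ∈ 𝓡.index, m (f (𝓡.left i) ⊗ₜ g (𝓡.right i)) := by
  simp [convBy, ← 𝓡.eq]

lemma convBy_convBy (f g h : C →ₗ[R] A) :
    convBy m (convBy m f g) h =
      m ∘ₗ m.rTensor A ∘ₗ map (map f g) h ∘ₗ comul.rTensor C ∘ₗ comul := by
  simp only [convBy, LinearMap.rTensor, ← LinearMap.comp_assoc, ← map_comp, LinearMap.id_comp,
    LinearMap.comp_id]

lemma convBy_assoc (hm : ∀ x y z, m (m (x ⊗ₜ y) ⊗ₜ z) = m (x ⊗ₜ m (y ⊗ₜ z)))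
    (f g h : C →ₗ[R] A) : convBy m (convBy m f g) h = convBy m f (convBy m g h) := by
  have hm' : m ∘ₗ m.rTensor A = m ∘ₗ m.lTensor A ∘ₗ (TensorProduct.assoc R A A A).toLinearMap :=
    TensorProduct.ext_threefold hm
  rw [convBy_convBy, ← LinearMap.comp_assoc, hm']
  simp only [LinearMap.comp_assoc]
  rw [← LinearMap.comp_assoc _ _ (TensorProduct.assoc R A A A).toLinearMap,
    ← map_map_comp_assoc_eq]
  simp only [LinearMap.comp_assoc]
  rw [Coalgebra.coassoc]
  simp only [convBy, LinearMap.lTensor, ← LinearMap.comp_assoc, ← map_comp, LinearMap.id_comp,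
    LinearMap.comp_id]

lemma convBy_counit_smulRight {e : A} (he : ∀ x, m (e ⊗ₜ x) = x) (f : C →ₗ[R] A) :
    convBy m (counit.smulRight e) f = f := by
  ext c
  rw [convBy_apply_repr m (ℛ R c)]
  conv_rhs => rw [← sum_counit_smul (ℛ R c)]
  simp [← smul_tmul', he]

lemma convBy_comp_coalgHom (f g : C →ₗ[R] A) (φ : D →ₗc[R] C) :
    convBy m (f ∘ₗ (φ : D →ₗ[R] C)) (g ∘ₗ (φ : D →ₗ[R] C)) = convBy m f g ∘ₗ (φ : D →ₗ[R] C) := by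
  simp [convBy, map_comp, LinearMap.comp_assoc]

variable {m} in
lemma convBy_left_cancel (hm : ∀ x y z, m (m (x ⊗ₜ y) ⊗ₜ z) = m (x ⊗ₜ m (y ⊗ₜ z)))
    {e : A} (he : ∀ x, m (e ⊗ₜ x) = x) {u φ f g : C →ₗ[R] A}
    (hu : convBy m u φ = counit.smulRight e) (h : convBy m φ f = convBy m φ g) : f = g := by
  rw [← convBy_counit_smulRight m he f, ← convBy_counit_smulRight m he g, ← hu,
    convBy_assoc m hm, convBy_assoc m hm, h]

end Convolution

section HopfBrace

variable {k H : Type*} [CommSemiring k] [Semiring H] [Bialgebra k H]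
  (cd : H ⊗[k] H →ₗ[k] H) (S : H →ₗ[k] H)

/-- `braceActOn cd S b a = a ⇀ b = S(a₁)·(a₂•b)`. -/
def braceActOn (b : H) : H →ₗ[k] H := convBy cd S (LinearMap.mulRight k b)

def braceAct : H ⊗[k] H →ₗ[k] H :=
  cd ∘ₗ map S (LinearMap.mul' k H) ∘ₗ (TensorProduct.assoc k H H H).toLinearMap ∘ₗ
    comul.rTensor H

lemma braceAct_tmul (a b : H) : braceAct cd S (a ⊗ₜ b) = braceActOn cd S b a := by
  suffices ∀ t : H ⊗[k] H, map S (LinearMap.mul' k H) (TensorProduct.assoc k H H H (t ⊗ₜ b)) =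
      map S (LinearMap.mulRight k b) t from congrArg cd (this (comul a))
  intro t
  induction t using TensorProduct.induction_on with
  | zero => simp
  | tmul x y => simp
  | add s t hs ht => simp [add_tmul, hs, ht]

variable {cd S}

lemma antipode_one (hone_r : ∀ x : H, cd (x ⊗ₜ 1) = x)
    (hS_l : convBy cd S LinearMap.id = counit.smulRight 1) : S 1 = 1 := by
  simpa [convBy, Algebra.TensorProduct.one_def, hone_r] using LinearMap.congr_fun hS_l 1

lemma braceActOn_apply_one (hone_l : ∀ x : H, cd (1 ⊗ₜ x) = x)
    (hone_r : ∀ x : H, cd (x ⊗ₜ 1) = x) (hS_l : convBy cd S LinearMap.id = counit.smulRight 1)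
    (b : H) : braceActOn cd S b 1 = b := by
  simp [braceActOn, convBy, Algebra.TensorProduct.one_def, antipode_one hone_r hS_l, hone_l]

lemma braceActOn_one (hS_l : convBy cd S LinearMap.id = counit.smulRight 1) :
    braceActOn cd S 1 = counit.smulRight 1 := by
  rw [braceActOn, LinearMap.mulRight_one, hS_l]

lemma braceActOn_cd (hassoc : ∀ x y z, cd (cd (x ⊗ₜ y) ⊗ₜ z) = cd (x ⊗ₜ cd (y ⊗ₜ z)))
    (hbc : ∀ b c : H, LinearMap.mulRight k (cd (b ⊗ₜ c)) =
      convBy cd (convBy cd (LinearMap.mulRight k b) S) (LinearMap.mulRight k c)) (b c : H) :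
    braceActOn cd S (cd (b ⊗ₜ c)) = convBy cd (braceActOn cd S b) (braceActOn cd S c) := by
  rw [braceActOn, hbc, ← convBy_assoc cd hassoc, ← convBy_assoc cd hassoc,
    convBy_assoc cd hassoc]
  rfl

lemma braceAct_comp_lTensor (hassoc : ∀ x y z, cd (cd (x ⊗ₜ y) ⊗ₜ z) = cd (x ⊗ₜ cd (y ⊗ₜ z)))
    (hbc : ∀ b c : H, LinearMap.mulRight k (cd (b ⊗ₜ c)) =
      convBy cd (convBy cd (LinearMap.mulRight k b) S) (LinearMap.mulRight k c)) :
    braceAct cd S ∘ₗ cd.lTensor H = cd ∘ₗ map (braceAct cd S) (braceAct cd S) ∘ₗ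
      (tensorTensorTensorComm k H H H H).toLinearMap ∘ₗ comul.rTensor (H ⊗[k] H) := by
  refine TensorProduct.ext_threefold' fun a b c => ?_
  simp [braceAct_tmul, braceActOn_cd hassoc hbc, convBy_apply_repr cd (ℛ k a), ← (ℛ k a).eq,
    sum_tmul]

lemma mulRight_cd_eq_convBy (hassoc : ∀ x y z, cd (cd (x ⊗ₜ y) ⊗ₜ z) = cd (x ⊗ₜ cd (y ⊗ₜ z)))
    (hbc : ∀ b c : H, LinearMap.mulRight k (cd (b ⊗ₜ c)) =
      convBy cd (convBy cd (LinearMap.mulRight k b) S) (LinearMap.mulRight k c)) (b c : H) :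
    LinearMap.mulRight k (cd (b ⊗ₜ c)) = convBy cd (LinearMap.mulRight k b) (braceActOn cd S c) := by
  rw [hbc, convBy_assoc cd hassoc, braceActOn]

lemma convBy_id_braceActOn (hassoc : ∀ x y z, cd (cd (x ⊗ₜ y) ⊗ₜ z) = cd (x ⊗ₜ cd (y ⊗ₜ z)))
    (hone_l : ∀ x : H, cd (1 ⊗ₜ x) = x) (hS_r : convBy cd LinearMap.id S = counit.smulRight 1)
    (c : H) : convBy cd LinearMap.id (braceActOn cd S c) = LinearMap.mulRight k c := by
  rw [braceActOn, ← convBy_assoc cd hassoc, hS_r, convBy_counit_smulRight cd hone_l]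

lemma convBy_comp_mul'_mul' (hS_l : convBy cd S LinearMap.id = counit.smulRight 1) :
    convBy cd (S ∘ₗ LinearMap.mul' k H) (LinearMap.mul' k H) = counit.smulRight 1 := by
  have h := convBy_comp_coalgHom cd S LinearMap.id (Bialgebra.mulCoalgHom k H)
  simp only [Bialgebra.toLinearMap_mulCoalgHom, LinearMap.id_comp] at h
  rw [h, hS_l]
  ext a b
  simp [mul_comm]

lemma convBy_mul'_braceActOn_comp_mul'
    (hassoc : ∀ x y z, cd (cd (x ⊗ₜ y) ⊗ₜ z) = cd (x ⊗ₜ cd (y ⊗ₜ z)))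
    (hone_l : ∀ x : H, cd (1 ⊗ₜ x) = x) (hS_r : convBy cd LinearMap.id S = counit.smulRight 1)
    (c : H) : convBy cd (LinearMap.mul' k H) (braceActOn cd S c ∘ₗ LinearMap.mul' k H) =
      LinearMap.mulRight k c ∘ₗ LinearMap.mul' k H := by
  have h := convBy_comp_coalgHom cd LinearMap.id (braceActOn cd S c) (Bialgebra.mulCoalgHom k H)
  simp only [Bialgebra.toLinearMap_mulCoalgHom, LinearMap.id_comp] at h
  rw [h, convBy_id_braceActOn hassoc hone_l hS_r]

lemma convBy_mul'_braceAct_comp_lTensor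
    (hassoc : ∀ x y z, cd (cd (x ⊗ₜ y) ⊗ₜ z) = cd (x ⊗ₜ cd (y ⊗ₜ z)))
    (hone_l : ∀ x : H, cd (1 ⊗ₜ x) = x) (hS_r : convBy cd LinearMap.id S = counit.smulRight 1)
    (hbc : ∀ b c : H, LinearMap.mulRight k (cd (b ⊗ₜ c)) =
      convBy cd (convBy cd (LinearMap.mulRight k b) S) (LinearMap.mulRight k c)) (c : H) :
    convBy cd (LinearMap.mul' k H) (braceAct cd S ∘ₗ (braceActOn cd S c).lTensor H) =
      LinearMap.mulRight k c ∘ₗ LinearMap.mul' k H := by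
  refine TensorProduct.ext' fun a b => ?_
  have hb : convBy cd LinearMap.id (braceActOn cd S c) b = b * c :=
    LinearMap.congr_fun (convBy_id_braceActOn hassoc hone_l hS_r c) b
  rw [convBy_apply_repr cd ((ℛ k a).tmul (ℛ k b))]
  simp only [Repr.tmul_index, Repr.tmul_left, Repr.tmul_right,
    Finset.sum_product, LinearMap.mul'_apply, LinearMap.comp_apply, LinearMap.lTensor_tmul,
    braceAct_tmul, LinearMap.mulRight_apply]
  rw [Finset.sum_comm, mul_assoc, ← hb, convBy_apply_repr cd (ℛ k b), Finset.mul_sum]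
  refine Finset.sum_congr rfl fun j _ => ?_
  rw [← LinearMap.mulRight_apply (R := k), mulRight_cd_eq_convBy hassoc hbc,
    convBy_apply_repr cd (ℛ k a)]
  simp

lemma braceActOn_mul (hassoc : ∀ x y z, cd (cd (x ⊗ₜ y) ⊗ₜ z) = cd (x ⊗ₜ cd (y ⊗ₜ z)))
    (hone_l : ∀ x : H, cd (1 ⊗ₜ x) = x)
    (hS_l : convBy cd S LinearMap.id = counit.smulRight 1)
    (hS_r : convBy cd LinearMap.id S = counit.smulRight 1)
    (hbc : ∀ b c : H, LinearMap.mulRight k (cd (b ⊗ₜ c)) =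
      convBy cd (convBy cd (LinearMap.mulRight k b) S) (LinearMap.mulRight k c)) (a b c : H) :
    braceActOn cd S c (a * b) = braceActOn cd S (braceActOn cd S c b) a := by
  have h : braceAct cd S ∘ₗ (braceActOn cd S c).lTensor H =
      braceActOn cd S c ∘ₗ LinearMap.mul' k H :=
    convBy_left_cancel hassoc hone_l (convBy_comp_mul'_mul' hS_l)
      ((convBy_mul'_braceAct_comp_lTensor hassoc hone_l hS_r hbc c).trans
        (convBy_mul'_braceActOn_comp_mul' hassoc hone_l hS_r c).symm)
  simpa [braceAct_tmul] using (LinearMap.congr_fun h (a ⊗ₜ b)).symm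

end HopfBrace

section

variable {k H : Type*} [Field k] [Ring H] [Bialgebra k H] (cd : H ⊗[k] H →ₗ[k] H) (S : H →ₗ[k] H)

lemma braceAct_eq_comp :
    braceAct cd S = cd ∘ₗ map S (mu k H) ∘ₗ assocMap k H ∘ₗ map (delta k H) LinearMap.id := rfl

lemma mulRight_cd_eq_convBy_of_brace_compat
    (hbc : ∀ (a b c : H) (ι : Type) (s : Finset ι) (a1 a2 a3 : ι → H),
      delta3 k H a = ∑ i ∈ s, (a1 i ⊗ₜ[k] a2 i) ⊗ₜ[k] a3 i →
      a * cd (b ⊗ₜ[k] c)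
        = ∑ i ∈ s, cd (cd ((a1 i * b) ⊗ₜ[k] S (a2 i)) ⊗ₜ[k] (a3 i * c))) (b c : H) :
    LinearMap.mulRight k (cd (b ⊗ₜ c)) =
      convBy cd (convBy cd (LinearMap.mulRight k b) S) (LinearMap.mulRight k c) := by
  ext a
  -- `hbc` only accepts index types in `Type`, hence a `Fin n`-indexed decomposition
  obtain ⟨n, x, y, z, h⟩ := exists_fin_sum_tmul_tmul (delta3 k H a)
  have h' : (comul.rTensor H ∘ₗ comul) a = delta3 k H a := rfl
  rw [LinearMap.mulRight_apply, hbc a b c (Fin n) Finset.univ x y z h, convBy_convBy,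
    LinearMap.comp_apply, LinearMap.comp_apply, LinearMap.comp_apply, h', h]
  simp

end

/-- Lemma 3.15, first part: given a bialgebra `(H,•,1,Δ,ε)`, a second
associative unital product `·` (= `cd`) with the same unit, and a linear map `S` with
`S(a₁)·a₂ = ε(a)1 = a₁·S(a₂)`, satisfying the Hopf brace compatibility
`a•(b·c) = (a₁•b)·S(a₂)·(a₃•c)`, the formula `a⇀b := S(a₁)·(a₂•b)` defines a left action
of `(H,•)` on `H`, and `(H,·,1)` is a left module algebra:
`a⇀(b·c) = (a₁⇀b)·(a₂⇀c)` and `a⇀1 = ε(a)1`. -/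
theorem leftaction_module_algebra_of_hopf_brace_compat
    (cd : H ⊗[k] H →ₗ[k] H) (S : H →ₗ[k] H)
    (hassoc : ∀ a b c : H, cd (cd (a ⊗ₜ[k] b) ⊗ₜ[k] c) = cd (a ⊗ₜ[k] cd (b ⊗ₜ[k] c)))
    (hone_l : ∀ a : H, cd ((1 : H) ⊗ₜ[k] a) = a)
    (hone_r : ∀ a : H, cd (a ⊗ₜ[k] (1 : H)) = a)
    (hS_l : cd ∘ₗ map S LinearMap.id ∘ₗ delta k H = Algebra.linearMap k H ∘ₗ eps k H)
    (hS_r : cd ∘ₗ map LinearMap.id S ∘ₗ delta k H = Algebra.linearMap k H ∘ₗ eps k H)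
    (hbc : ∀ (a b c : H) (ι : Type) (s : Finset ι) (a1 a2 a3 : ι → H),
      delta3 k H a = ∑ i ∈ s, (a1 i ⊗ₜ[k] a2 i) ⊗ₜ[k] a3 i →
      a * cd (b ⊗ₜ[k] c)
        = ∑ i ∈ s, cd (cd ((a1 i * b) ⊗ₜ[k] S (a2 i)) ⊗ₜ[k] (a3 i * c))) :
    (∀ b : H,
      (cd ∘ₗ map S (mu k H) ∘ₗ assocMap k H ∘ₗ map (delta k H) LinearMap.id)
        ((1 : H) ⊗ₜ[k] b) = b) ∧
    (∀ a b c : H,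
      (cd ∘ₗ map S (mu k H) ∘ₗ assocMap k H ∘ₗ map (delta k H) LinearMap.id)
          ((a * b) ⊗ₜ[k] c)
        = (cd ∘ₗ map S (mu k H) ∘ₗ assocMap k H ∘ₗ map (delta k H) LinearMap.id)
            (a ⊗ₜ[k]
              (cd ∘ₗ map S (mu k H) ∘ₗ assocMap k H ∘ₗ map (delta k H) LinearMap.id)
                (b ⊗ₜ[k] c))) ∧
    ((cd ∘ₗ map S (mu k H) ∘ₗ assocMap k H ∘ₗ map (delta k H) LinearMap.id) ∘ₗ
        map LinearMap.id cd
      = cd ∘ₗ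
          map (cd ∘ₗ map S (mu k H) ∘ₗ assocMap k H ∘ₗ map (delta k H) LinearMap.id)
              (cd ∘ₗ map S (mu k H) ∘ₗ assocMap k H ∘ₗ map (delta k H) LinearMap.id) ∘ₗ
          ttcMap k H ∘ₗ map (delta k H) LinearMap.id) ∧
    (∀ a : H,
      (cd ∘ₗ map S (mu k H) ∘ₗ assocMap k H ∘ₗ map (delta k H) LinearMap.id)
        (a ⊗ₜ[k] (1 : H)) = eps k H a • (1 : H)) := by
  have hS_l' : convBy cd S LinearMap.id = counit.smulRight 1 :=
    hS_l.trans (Algebra.linearMap_comp_eq_smulRight _)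
  have hS_r' : convBy cd LinearMap.id S = counit.smulRight 1 :=
    hS_r.trans (Algebra.linearMap_comp_eq_smulRight _)
  have hbc' := mulRight_cd_eq_convBy_of_brace_compat cd S hbc
  simp only [← braceAct_eq_comp]
  refine ⟨fun b => ?_, fun a b c => ?_, braceAct_comp_lTensor hassoc hbc', fun a => ?_⟩
  · rw [braceAct_tmul, braceActOn_apply_one hone_l hone_r hS_l']
  · simp only [braceAct_tmul, braceActOn_mul hassoc hone_l hS_l' hS_r' hbc']
  · rw [braceAct_tmul, braceActOn_one hS_l']
    rfl

end
end

section
/- In the setting of a Hopf brace-like structure as above, the identity S(a₁•b)·a₂ = S(a₁)·(a₂•S(b)) holds for all a,b ∈ H. -/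
open TensorProduct

noncomputable section

variable (k H : Type*) [Field k] [Ring H] [Bialgebra k H]

variable {k H}

/-- `a ⊗ b ↦ ε(b) • a`. -/
def pi1 : H ⊗[k] H →ₗ[k] H :=
  (TensorProduct.rid k H).toLinearMap ∘ₗ LinearMap.lTensor H (eps k H)

@[simp] lemma pi1_tmul (a b : H) : pi1 (a ⊗ₜ[k] b) = eps k H b • a := by
  simp [pi1]

lemma sum_eps_right {a : H} {ι : Type*} {s : Finset ι} {f g : ι → H}
    (h : delta k H a = ∑ i ∈ s, f i ⊗ₜ[k] g i) :
    ∑ i ∈ s, eps k H (g i) • f i = a := by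
  have := congrArg (TensorProduct.rid k H ∘ₗ LinearMap.lTensor H (eps k H) : H ⊗[k] H →ₗ[k] H) h
  -- alternative: use Coalgebra.lTensor_counit_comul
  have h2 : (LinearMap.lTensor H (Coalgebra.counit : H →ₗ[k] k)) (Coalgebra.comul a) = a ⊗ₜ[k] 1 :=
    Coalgebra.lTensor_counit_comul a
  calc ∑ i ∈ s, eps k H (g i) • f i
      = (TensorProduct.rid k H) ((LinearMap.lTensor H (eps k H)) (delta k H a)) := by
        rw [h, map_sum, map_sum]; simp
    _ = a := by rw [show (delta k H a : H ⊗[k] H) = Coalgebra.comul a from rfl]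
                simp [eps, h2]

lemma sum_eps_left {a : H} {ι : Type*} {s : Finset ι} {f g : ι → H}
    (h : delta k H a = ∑ i ∈ s, f i ⊗ₜ[k] g i) :
    ∑ i ∈ s, eps k H (f i) • g i = a := by
  have h2 : (LinearMap.rTensor H (Coalgebra.counit : H →ₗ[k] k)) (Coalgebra.comul a) = 1 ⊗ₜ[k] a :=
    Coalgebra.rTensor_counit_comul a
  calc ∑ i ∈ s, eps k H (f i) • g i
      = (TensorProduct.lid k H) ((LinearMap.rTensor H (eps k H)) (delta k H a)) := by
        rw [h, map_sum, map_sum]; simp [TensorProduct.smul_tmul']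
    _ = a := by rw [show (delta k H a : H ⊗[k] H) = Coalgebra.comul a from rfl]
                simp [eps, h2]

lemma conv_eval (cd : H ⊗[k] H →ₗ[k] H) (f g : H ⊗[k] H →ₗ[k] H) {a b : H}
    {ι ι' : Type*} {s : Finset ι} {t : Finset ι'} {a1 a2 : ι → H} {b1 b2 : ι' → H}
    (ha : delta k H a = ∑ i ∈ s, a1 i ⊗ₜ[k] a2 i)
    (hb : delta k H b = ∑ j ∈ t, b1 j ⊗ₜ[k] b2 j) :
    (cd ∘ₗ map f g ∘ₗ dd k H) (a ⊗ₜ[k] b)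
      = ∑ i ∈ s, ∑ j ∈ t, cd (f (a1 i ⊗ₜ[k] b1 j) ⊗ₜ[k] g (a2 i ⊗ₜ[k] b2 j)) := by
  simp only [LinearMap.comp_apply, dd, ttcMap, map_tmul, LinearMap.coe_comp,
    Function.comp_apply]
  rw [ha, hb]
  simp [sum_tmul, tmul_sum, map_sum]
  rw [Finset.sum_comm]

example : True := trivial

theorem exists_repr (x : H ⊗[k] H) :
    ∃ (n : ℕ) (f g : ℕ → H), x = ∑ i ∈ Finset.range n, f i ⊗ₜ[k] g i := by
  induction x with
  | zero => exact ⟨0, 0, 0, by simp⟩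
  | tmul a b => exact ⟨1, fun _ => a, fun _ => b, by simp⟩
  | add x y hx hy =>
    obtain ⟨n, f, g, rfl⟩ := hx
    obtain ⟨m, p, q, rfl⟩ := hy
    refine ⟨n + m, fun i => if i < n then f i else p (i - n),
      fun i => if i < n then g i else q (i - n), ?_⟩
    rw [Finset.sum_range_add]
    congr 1
    · exact Finset.sum_congr rfl fun i hi => by simp [Finset.mem_range.mp hi]
    · exact Finset.sum_congr rfl fun i _ => by simp

lemma L_eval (cd : H ⊗[k] H →ₗ[k] H) (S : H →ₗ[k] H) {a b : H}
    {ι : Type*} {s : Finset ι} {a1 a2 : ι → H}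
    (ha : delta k H a = ∑ i ∈ s, a1 i ⊗ₜ[k] a2 i) :
    (cd ∘ₗ map (S ∘ₗ mu k H) pi1 ∘ₗ dd k H) (a ⊗ₜ[k] b)
      = ∑ i ∈ s, cd (S (a1 i * b) ⊗ₜ[k] a2 i) := by
  obtain ⟨n, p, q, hb⟩ := exists_repr (delta k H b)
  rw [conv_eval cd _ _ ha hb]
  refine Finset.sum_congr rfl fun i _ => ?_
  have key : ∀ j ∈ Finset.range n,
      cd ((S ∘ₗ mu k H) (a1 i ⊗ₜ[k] p j) ⊗ₜ[k] pi1 (a2 i ⊗ₜ[k] q j))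
      = (cd ∘ₗ (mk k H H).flip (a2 i) ∘ₗ S ∘ₗ LinearMap.mulLeft k (a1 i))
          (eps k H (q j) • p j) := by
    intro j _
    simp only [mu, LinearMap.coe_comp, Function.comp_apply, LinearMap.mul'_apply, pi1_tmul,
      LinearMap.flip_apply, mk_apply, LinearMap.mulLeft_apply, map_smul, mul_smul_comm,
      tmul_smul]
  rw [Finset.sum_congr rfl key, ← map_sum, sum_eps_right hb]
  simp

lemma R_eval (cd : H ⊗[k] H →ₗ[k] H) (S : H →ₗ[k] H) {x y : H}
    {ι : Type*} {s : Finset ι} {x1 x2 : ι → H}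
    (hx : delta k H x = ∑ i ∈ s, x1 i ⊗ₜ[k] x2 i) :
    (cd ∘ₗ map (S ∘ₗ pi1) (mu k H ∘ₗ LinearMap.lTensor H S) ∘ₗ dd k H) (x ⊗ₜ[k] y)
      = ∑ i ∈ s, cd (S (x1 i) ⊗ₜ[k] (x2 i * S y)) := by
  obtain ⟨n, p, q, hy⟩ := exists_repr (delta k H y)
  rw [conv_eval cd _ _ hx hy]
  refine Finset.sum_congr rfl fun i _ => ?_
  have key : ∀ j ∈ Finset.range n,
      cd ((S ∘ₗ pi1) (x1 i ⊗ₜ[k] p j) ⊗ₜ[k] (mu k H ∘ₗ LinearMap.lTensor H S) (x2 i ⊗ₜ[k] q j))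
      = (cd ∘ₗ mk k H H (S (x1 i)) ∘ₗ LinearMap.mulLeft k (x2 i) ∘ₗ S)
          (eps k H (p j) • q j) := by
    intro j _
    simp only [mu, LinearMap.coe_comp, Function.comp_apply, LinearMap.mul'_apply, pi1_tmul,
      LinearMap.lTensor_tmul, mk_apply, LinearMap.mulLeft_apply, map_smul, mul_smul_comm,
      tmul_smul]
    rw [← TensorProduct.smul_tmul', map_smul]
  rw [Finset.sum_congr rfl key, ← map_sum, sum_eps_left hy]
  simp

lemma collapse (cd : H ⊗[k] H →ₗ[k] H) (S : H →ₗ[k] H)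
    (hS_l : cd ∘ₗ map S LinearMap.id ∘ₗ delta k H = Algebra.linearMap k H ∘ₗ eps k H)
    {x y : H} {ι ι' : Type*} {s : Finset ι} {t : Finset ι'}
    {c d : ι → H} {p q : ι' → H}
    (hx : delta k H x = ∑ i ∈ s, c i ⊗ₜ[k] d i)
    (hy : delta k H y = ∑ j ∈ t, p j ⊗ₜ[k] q j) :
    ∑ i ∈ s, ∑ j ∈ t, cd (S (c i * p j) ⊗ₜ[k] (d i * q j))
      = (eps k H x * eps k H y) • (1 : H) := by
  have hmul : delta k H (x * y) = ∑ i ∈ s, ∑ j ∈ t, (c i * p j) ⊗ₜ[k] (d i * q j) := by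
    show Coalgebra.comul (x * y) = _
    rw [Bialgebra.comul_mul]
    rw [show (Coalgebra.comul x : H ⊗[k] H) = ∑ i ∈ s, c i ⊗ₜ[k] d i from hx,
        show (Coalgebra.comul y : H ⊗[k] H) = ∑ j ∈ t, p j ⊗ₜ[k] q j from hy,
        Finset.sum_mul_sum]
    simp [Algebra.TensorProduct.tmul_mul_tmul]
  have h1 : ∑ i ∈ s, ∑ j ∈ t, cd (S (c i * p j) ⊗ₜ[k] (d i * q j))
      = (cd ∘ₗ map S LinearMap.id ∘ₗ delta k H) (x * y) := by
    rw [LinearMap.comp_apply, LinearMap.comp_apply, hmul]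
    simp [map_sum]
  rw [h1, hS_l]
  simp [eps, Algebra.linearMap_apply, Algebra.algebraMap_eq_smul_one, Bialgebra.counit_mul]

lemma coassoc_sum {a : H} {ι : Type*} {s : Finset ι} {f g : ι → H}
    (h : delta k H a = ∑ i ∈ s, f i ⊗ₜ[k] g i)
    {t : ι → Finset ℕ} {c d : ι → ℕ → H}
    (hg : ∀ i ∈ s, delta k H (g i) = ∑ l ∈ t i, c i l ⊗ₜ[k] d i l)
    {u : ι → Finset ℕ} {c' d' : ι → ℕ → H}
    (hf : ∀ i ∈ s, delta k H (f i) = ∑ p ∈ u i, c' i p ⊗ₜ[k] d' i p) :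
    ∑ i ∈ s, ∑ l ∈ t i, f i ⊗ₜ[k] (c i l ⊗ₜ[k] d i l)
      = ∑ i ∈ s, ∑ p ∈ u i, c' i p ⊗ₜ[k] (d' i p ⊗ₜ[k] g i) := by
  have hL : ∑ i ∈ s, ∑ l ∈ t i, f i ⊗ₜ[k] (c i l ⊗ₜ[k] d i l)
      = LinearMap.lTensor H (Coalgebra.comul (R := k)) (Coalgebra.comul a) := by
    rw [show (Coalgebra.comul a : H ⊗[k] H) = ∑ i ∈ s, f i ⊗ₜ[k] g i from h, map_sum]
    refine Finset.sum_congr rfl fun i hi => ?_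
    rw [LinearMap.lTensor_tmul, show (Coalgebra.comul (g i) : H ⊗[k] H) = _ from hg i hi,
      tmul_sum]
  have hR : ∑ i ∈ s, ∑ p ∈ u i, c' i p ⊗ₜ[k] (d' i p ⊗ₜ[k] g i)
      = (TensorProduct.assoc k H H H).toLinearMap
          (LinearMap.rTensor H (Coalgebra.comul (R := k)) (Coalgebra.comul a)) := by
    rw [show (Coalgebra.comul a : H ⊗[k] H) = ∑ i ∈ s, f i ⊗ₜ[k] g i from h, map_sum, map_sum]
    refine Finset.sum_congr rfl fun i hi => ?_
    rw [LinearMap.rTensor_tmul, show (Coalgebra.comul (f i) : H ⊗[k] H) = _ from hf i hi,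
      sum_tmul, map_sum]
    simp
  rw [hL, hR]
  exact (Coalgebra.coassoc_apply a).symm

lemma delta3_repr {a : H} {n : ℕ} {f g : ℕ → H}
    (ha : delta k H a = ∑ i ∈ Finset.range n, f i ⊗ₜ[k] g i)
    {m : ℕ → ℕ} {c d : ℕ → ℕ → H}
    (hg : ∀ i, delta k H (g i) = ∑ l ∈ Finset.range (m i), c i l ⊗ₜ[k] d i l) :
    delta3 k H a = ∑ σ ∈ (Finset.range n).sigma (fun i => Finset.range (m i)),
      (f σ.1 ⊗ₜ[k] c σ.1 σ.2) ⊗ₜ[k] d σ.1 σ.2 := by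
  have h1 : delta3 k H a
      = (TensorProduct.assoc k H H H).symm.toLinearMap
          (LinearMap.lTensor H (Coalgebra.comul (R := k)) (Coalgebra.comul a)) := by
    show (map (delta k H) LinearMap.id) (delta k H a) = _
    rw [show map (delta k H) (LinearMap.id : H →ₗ[k] H)
          = LinearMap.rTensor H (Coalgebra.comul (R := k)) from rfl]
    exact (Coalgebra.coassoc_symm_apply a).symm
  rw [h1, show (Coalgebra.comul a : H ⊗[k] H) = ∑ i ∈ Finset.range n, f i ⊗ₜ[k] g i from ha,
    map_sum, map_sum, Finset.sum_sigma]
  refine Finset.sum_congr rfl fun i _ => ?_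
  rw [LinearMap.lTensor_tmul, show (Coalgebra.comul (g i) : H ⊗[k] H) = _ from hg i,
    tmul_sum, map_sum]
  simp

lemma lemG (cd : H ⊗[k] H →ₗ[k] H) (S : H →ₗ[k] H)
    (hassoc : ∀ a b c : H, cd (cd (a ⊗ₜ[k] b) ⊗ₜ[k] c) = cd (a ⊗ₜ[k] cd (b ⊗ₜ[k] c)))
    (hS_r : cd ∘ₗ map LinearMap.id S ∘ₗ delta k H = Algebra.linearMap k H ∘ₗ eps k H)
    (hbc : ∀ (a b c : H) (ι : Type) (s : Finset ι) (a1 a2 a3 : ι → H),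
      delta3 k H a = ∑ i ∈ s, (a1 i ⊗ₜ[k] a2 i) ⊗ₜ[k] a3 i →
      a * cd (b ⊗ₜ[k] c)
        = ∑ i ∈ s, cd (cd ((a1 i * b) ⊗ₜ[k] S (a2 i)) ⊗ₜ[k] (a3 i * c))) :
    cd ∘ₗ map (mu k H)
        (cd ∘ₗ map (S ∘ₗ pi1) (mu k H ∘ₗ LinearMap.lTensor H S) ∘ₗ dd k H) ∘ₗ dd k H
      = pi1 := by
  apply TensorProduct.ext'
  intro a b
  obtain ⟨n, f, g, ha⟩ := exists_repr (delta k H a)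
  obtain ⟨nb, p, q, hb⟩ := exists_repr (delta k H b)
  choose m c d hg using fun i => exists_repr (delta k H (g i))
  rw [conv_eval cd _ _ ha hb]
  calc ∑ i ∈ Finset.range n, ∑ j ∈ Finset.range nb,
        cd ((mu k H) (f i ⊗ₜ[k] p j) ⊗ₜ[k]
          (cd ∘ₗ map (S ∘ₗ pi1) (mu k H ∘ₗ LinearMap.lTensor H S) ∘ₗ dd k H) (g i ⊗ₜ[k] q j))
      = ∑ j ∈ Finset.range nb, ∑ i ∈ Finset.range n, ∑ l ∈ Finset.range (m i),
          cd (cd ((f i * p j) ⊗ₜ[k] S (c i l)) ⊗ₜ[k] (d i l * S (q j))) := by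
        rw [Finset.sum_comm]
        refine Finset.sum_congr rfl fun j _ => Finset.sum_congr rfl fun i _ => ?_
        rw [R_eval cd S (hg i), show (mu k H) (f i ⊗ₜ[k] p j) = f i * p j from rfl,
          tmul_sum, map_sum]
        exact Finset.sum_congr rfl fun l _ => (hassoc _ _ _).symm
    _ = ∑ j ∈ Finset.range nb, a * cd (p j ⊗ₜ[k] S (q j)) := by
        refine Finset.sum_congr rfl fun j _ => ?_
        rw [Finset.sum_sigma']
        exact (hbc a (p j) (S (q j)) ((_ : ℕ) × ℕ) _ _ _ _ (delta3_repr ha hg)).symm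
    _ = a * ((cd ∘ₗ map LinearMap.id S ∘ₗ delta k H) b) := by
        rw [← Finset.mul_sum]
        congr 1
        rw [LinearMap.comp_apply, LinearMap.comp_apply, hb, map_sum, map_sum]
        simp
    _ = pi1 (a ⊗ₜ[k] b) := by
        rw [hS_r]
        simp [eps, Algebra.linearMap_apply, Algebra.algebraMap_eq_smul_one, mul_smul_comm]

lemma lemH (cd : H ⊗[k] H →ₗ[k] H) (S : H →ₗ[k] H)
    (hassoc : ∀ a b c : H, cd (cd (a ⊗ₜ[k] b) ⊗ₜ[k] c) = cd (a ⊗ₜ[k] cd (b ⊗ₜ[k] c)))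
    (hone_l : ∀ a : H, cd ((1 : H) ⊗ₜ[k] a) = a)
    (hS_l : cd ∘ₗ map S LinearMap.id ∘ₗ delta k H = Algebra.linearMap k H ∘ₗ eps k H)
    (X : H ⊗[k] H →ₗ[k] H) :
    cd ∘ₗ map (S ∘ₗ mu k H) (cd ∘ₗ map (mu k H) X ∘ₗ dd k H) ∘ₗ dd k H = X := by
  apply TensorProduct.ext'
  intro a b
  obtain ⟨n, f, g, ha⟩ := exists_repr (delta k H a)
  obtain ⟨nb, p, q, hb⟩ := exists_repr (delta k H b)
  choose m c d hg using fun i => exists_repr (delta k H (g i))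
  choose u c' d' hf using fun i => exists_repr (delta k H (f i))
  choose m2 e r he using fun j => exists_repr (delta k H (q j))
  choose u2 p' q' hp using fun j => exists_repr (delta k H (p j))
  rw [conv_eval cd _ _ ha hb]
  calc ∑ i ∈ Finset.range n, ∑ j ∈ Finset.range nb,
        cd ((S ∘ₗ mu k H) (f i ⊗ₜ[k] p j) ⊗ₜ[k]
          (cd ∘ₗ map (mu k H) X ∘ₗ dd k H) (g i ⊗ₜ[k] q j))
      = ∑ i ∈ Finset.range n, ∑ j ∈ Finset.range nb, ∑ l ∈ Finset.range (m i),
          ∑ o ∈ Finset.range (m2 j),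
          cd (cd (S (f i * p j) ⊗ₜ[k] (c i l * e j o)) ⊗ₜ[k] X (d i l ⊗ₜ[k] r j o)) := by
        refine Finset.sum_congr rfl fun i _ => Finset.sum_congr rfl fun j _ => ?_
        rw [conv_eval cd _ _ (hg i) (he j),
          show (S ∘ₗ mu k H) (f i ⊗ₜ[k] p j) = S (f i * p j) from rfl]
        rw [tmul_sum, map_sum]
        refine Finset.sum_congr rfl fun l _ => ?_
        rw [tmul_sum, map_sum]
        refine Finset.sum_congr rfl fun o _ => ?_
        rw [show (mu k H) (c i l ⊗ₜ[k] e j o) = c i l * e j o from rfl]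
        exact (hassoc _ _ _).symm
    _ = ∑ j ∈ Finset.range nb, ∑ o ∈ Finset.range (m2 j), ∑ i ∈ Finset.range n,
          ∑ l ∈ Finset.range (m i),
          cd (cd (S (f i * p j) ⊗ₜ[k] (c i l * e j o)) ⊗ₜ[k] X (d i l ⊗ₜ[k] r j o)) := by
        rw [Finset.sum_comm]
        refine Finset.sum_congr rfl fun j _ => ?_
        rw [Finset.sum_congr rfl fun i (_ : i ∈ Finset.range n) =>
          (Finset.sum_comm (s := Finset.range (m i)) (t := Finset.range (m2 j)))]
        exact Finset.sum_comm
    _ = ∑ j ∈ Finset.range nb, ∑ o ∈ Finset.range (m2 j), ∑ i ∈ Finset.range n,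
          ∑ v ∈ Finset.range (u i),
          cd (cd (S (c' i v * p j) ⊗ₜ[k] (d' i v * e j o)) ⊗ₜ[k] X (g i ⊗ₜ[k] r j o)) := by
        refine Finset.sum_congr rfl fun j _ => Finset.sum_congr rfl fun o _ => ?_
        let Ψ : H ⊗[k] (H ⊗[k] H) →ₗ[k] H :=
          cd ∘ₗ map cd (X ∘ₗ (mk k H H).flip (r j o))
            ∘ₗ (TensorProduct.assoc k H H H).symm.toLinearMap
            ∘ₗ map (S ∘ₗ LinearMap.mulRight k (p j))
                (map (LinearMap.mulRight k (e j o)) LinearMap.id)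
        have hΨ : ∀ u₁ u₂ u₃ : H, Ψ (u₁ ⊗ₜ[k] (u₂ ⊗ₜ[k] u₃))
            = cd (cd (S (u₁ * p j) ⊗ₜ[k] (u₂ * e j o)) ⊗ₜ[k] X (u₃ ⊗ₜ[k] r j o)) := by
          intro u₁ u₂ u₃; simp [Ψ]
        calc ∑ i ∈ Finset.range n, ∑ l ∈ Finset.range (m i),
              cd (cd (S (f i * p j) ⊗ₜ[k] (c i l * e j o)) ⊗ₜ[k] X (d i l ⊗ₜ[k] r j o))
            = Ψ (∑ i ∈ Finset.range n, ∑ l ∈ Finset.range (m i),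
                f i ⊗ₜ[k] (c i l ⊗ₜ[k] d i l)) := by
              rw [map_sum]
              refine Finset.sum_congr rfl fun i _ => ?_
              rw [map_sum]
              exact Finset.sum_congr rfl fun l _ => (hΨ _ _ _).symm
          _ = Ψ (∑ i ∈ Finset.range n, ∑ v ∈ Finset.range (u i),
                c' i v ⊗ₜ[k] (d' i v ⊗ₜ[k] g i)) := by
              rw [coassoc_sum ha (fun i _ => hg i) (fun i _ => hf i)]
          _ = ∑ i ∈ Finset.range n, ∑ v ∈ Finset.range (u i),
              cd (cd (S (c' i v * p j) ⊗ₜ[k] (d' i v * e j o)) ⊗ₜ[k] X (g i ⊗ₜ[k] r j o)) := by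
              rw [map_sum]
              refine Finset.sum_congr rfl fun i _ => ?_
              rw [map_sum]
              exact Finset.sum_congr rfl fun v _ => hΨ _ _ _
    _ = ∑ i ∈ Finset.range n, ∑ v ∈ Finset.range (u i), ∑ j ∈ Finset.range nb,
          ∑ o ∈ Finset.range (m2 j),
          cd (cd (S (c' i v * p j) ⊗ₜ[k] (d' i v * e j o)) ⊗ₜ[k] X (g i ⊗ₜ[k] r j o)) := by
        rw [Finset.sum_congr rfl fun j (_ : j ∈ Finset.range nb) =>
          (Finset.sum_comm (s := Finset.range (m2 j)) (t := Finset.range n))]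
        rw [Finset.sum_congr rfl fun j (_ : j ∈ Finset.range nb) =>
          (Finset.sum_congr rfl fun i (_ : i ∈ Finset.range n) =>
            (Finset.sum_comm (s := Finset.range (m2 j)) (t := Finset.range (u i))))]
        rw [Finset.sum_comm]
        refine Finset.sum_congr rfl fun i _ => Finset.sum_comm
    _ = ∑ i ∈ Finset.range n, ∑ v ∈ Finset.range (u i), ∑ j ∈ Finset.range nb,
          ∑ w ∈ Finset.range (u2 j),
          cd (cd (S (c' i v * p' j w) ⊗ₜ[k] (d' i v * q' j w)) ⊗ₜ[k] X (g i ⊗ₜ[k] q j)) := by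
        refine Finset.sum_congr rfl fun i _ => Finset.sum_congr rfl fun v _ => ?_
        let Θ : H ⊗[k] (H ⊗[k] H) →ₗ[k] H :=
          cd ∘ₗ map cd (X ∘ₗ mk k H H (g i))
            ∘ₗ (TensorProduct.assoc k H H H).symm.toLinearMap
            ∘ₗ map (S ∘ₗ LinearMap.mulLeft k (c' i v))
                (map (LinearMap.mulLeft k (d' i v)) LinearMap.id)
        have hΘ : ∀ v₁ v₂ v₃ : H, Θ (v₁ ⊗ₜ[k] (v₂ ⊗ₜ[k] v₃))
            = cd (cd (S (c' i v * v₁) ⊗ₜ[k] (d' i v * v₂)) ⊗ₜ[k] X (g i ⊗ₜ[k] v₃)) := by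
          intro v₁ v₂ v₃; simp [Θ]
        calc ∑ j ∈ Finset.range nb, ∑ o ∈ Finset.range (m2 j),
              cd (cd (S (c' i v * p j) ⊗ₜ[k] (d' i v * e j o)) ⊗ₜ[k] X (g i ⊗ₜ[k] r j o))
            = Θ (∑ j ∈ Finset.range nb, ∑ o ∈ Finset.range (m2 j),
                p j ⊗ₜ[k] (e j o ⊗ₜ[k] r j o)) := by
              rw [map_sum]
              refine Finset.sum_congr rfl fun j _ => ?_
              rw [map_sum]
              exact Finset.sum_congr rfl fun o _ => (hΘ _ _ _).symm
          _ = Θ (∑ j ∈ Finset.range nb, ∑ w ∈ Finset.range (u2 j),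
                p' j w ⊗ₜ[k] (q' j w ⊗ₜ[k] q j)) := by
              rw [coassoc_sum hb (fun j _ => he j) (fun j _ => hp j)]
          _ = ∑ j ∈ Finset.range nb, ∑ w ∈ Finset.range (u2 j),
              cd (cd (S (c' i v * p' j w) ⊗ₜ[k] (d' i v * q' j w)) ⊗ₜ[k] X (g i ⊗ₜ[k] q j)) := by
              rw [map_sum]
              refine Finset.sum_congr rfl fun j _ => ?_
              rw [map_sum]
              exact Finset.sum_congr rfl fun w _ => hΘ _ _ _
    _ = ∑ i ∈ Finset.range n, ∑ j ∈ Finset.range nb,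
          (eps k H (f i) * eps k H (p j)) • X (g i ⊗ₜ[k] q j) := by
        refine Finset.sum_congr rfl fun i _ => ?_
        rw [Finset.sum_comm]
        refine Finset.sum_congr rfl fun j _ => ?_
        have hZ : ∑ v ∈ Finset.range (u i), ∑ w ∈ Finset.range (u2 j),
            cd (cd (S (c' i v * p' j w) ⊗ₜ[k] (d' i v * q' j w)) ⊗ₜ[k] X (g i ⊗ₜ[k] q j))
            = (cd ∘ₗ (mk k H H).flip (X (g i ⊗ₜ[k] q j)))
                (∑ v ∈ Finset.range (u i), ∑ w ∈ Finset.range (u2 j),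
                  cd (S (c' i v * p' j w) ⊗ₜ[k] (d' i v * q' j w))) := by
          rw [map_sum]
          refine Finset.sum_congr rfl fun v _ => ?_
          rw [map_sum]
          exact Finset.sum_congr rfl fun w _ => rfl
        rw [hZ, collapse cd S hS_l (hf i) (hp j)]
        simp [hone_l]
    _ = X (a ⊗ₜ[k] b) := by
        have hstep : ∀ i, ∑ j ∈ Finset.range nb,
            (eps k H (f i) * eps k H (p j)) • X (g i ⊗ₜ[k] q j)
            = eps k H (f i) • X (g i ⊗ₜ[k] b) := by
          intro i
          have : ∀ j ∈ Finset.range nb,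
              (eps k H (f i) * eps k H (p j)) • X (g i ⊗ₜ[k] q j)
              = eps k H (f i) • (X ∘ₗ mk k H H (g i)) (eps k H (p j) • q j) := by
            intro j _
            simp [mul_smul, tmul_smul]
          rw [Finset.sum_congr rfl this, ← Finset.smul_sum, ← map_sum, sum_eps_left hb]
          simp
        rw [Finset.sum_congr rfl fun i _ => hstep i]
        have : ∀ i ∈ Finset.range n,
            eps k H (f i) • X (g i ⊗ₜ[k] b)
            = (X ∘ₗ (mk k H H).flip b) (eps k H (f i) • g i) := by
          intro i _
          simp [TensorProduct.smul_tmul']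
        rw [Finset.sum_congr rfl this, ← map_sum, sum_eps_left ha]
        rfl


variable (k H)

/-- in a Hopf brace-like structure, `S(a₁•b)·a₂ = S(a₁)·(a₂•S(b))`. -/
theorem S_mul_cdot_identity
    (cd : H ⊗[k] H →ₗ[k] H) (S : H →ₗ[k] H)
    (hassoc : ∀ a b c : H, cd (cd (a ⊗ₜ[k] b) ⊗ₜ[k] c) = cd (a ⊗ₜ[k] cd (b ⊗ₜ[k] c)))
    (hone_l : ∀ a : H, cd ((1 : H) ⊗ₜ[k] a) = a)
    (hone_r : ∀ a : H, cd (a ⊗ₜ[k] (1 : H)) = a)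
    (hS_l : cd ∘ₗ map S LinearMap.id ∘ₗ delta k H = Algebra.linearMap k H ∘ₗ eps k H)
    (hS_r : cd ∘ₗ map LinearMap.id S ∘ₗ delta k H = Algebra.linearMap k H ∘ₗ eps k H)
    (hbc : ∀ (a b c : H) (ι : Type) (s : Finset ι) (a1 a2 a3 : ι → H),
      delta3 k H a = ∑ i ∈ s, (a1 i ⊗ₜ[k] a2 i) ⊗ₜ[k] a3 i →
      a * cd (b ⊗ₜ[k] c)
        = ∑ i ∈ s, cd (cd ((a1 i * b) ⊗ₜ[k] S (a2 i)) ⊗ₜ[k] (a3 i * c))) :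
    ∀ (a b : H) (ι : Type) (s : Finset ι) (a1 a2 : ι → H),
      delta k H a = ∑ i ∈ s, a1 i ⊗ₜ[k] a2 i →
      ∑ i ∈ s, cd (S (a1 i * b) ⊗ₜ[k] a2 i)
        = ∑ i ∈ s, cd (S (a1 i) ⊗ₜ[k] (a2 i * S b)) := by
  intro a b ι s a1 a2 ha
  have hLR : (cd ∘ₗ map (S ∘ₗ mu k H) pi1 ∘ₗ dd k H)
      = (cd ∘ₗ map (S ∘ₗ pi1) (mu k H ∘ₗ LinearMap.lTensor H S) ∘ₗ dd k H) := by
    conv_lhs => rw [← lemG cd S hassoc hS_r hbc]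
    exact lemH cd S hassoc hone_l hS_l _
  calc ∑ i ∈ s, cd (S (a1 i * b) ⊗ₜ[k] a2 i)
      = (cd ∘ₗ map (S ∘ₗ mu k H) pi1 ∘ₗ dd k H) (a ⊗ₜ[k] b) := (L_eval cd S ha).symm
    _ = (cd ∘ₗ map (S ∘ₗ pi1) (mu k H ∘ₗ LinearMap.lTensor H S) ∘ₗ dd k H) (a ⊗ₜ[k] b) := by
        rw [hLR]
    _ = ∑ i ∈ s, cd (S (a1 i) ⊗ₜ[k] (a2 i * S b)) := R_eval cd S ha


end
end
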